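/- Let p > 1 and t > 0, r, s ≥ 0. Define G(t,s,r) = (1+(p−1)t^p)r^p + (1+(p−1)t^{−p})s^p + (1+t²)r² + (1+t^{−2})s² − p t^{p−1} r^{p−1} s − p t^{1−p} s^{p−1} r − 2 t r s − 2 t^{−1} r s. Then G(t,s,r) ≥ 0, and G(t,s,r) = 0 if and only if s = t r. -/

import Mathlib

/-!
`G` is the sum of two instances of Young's inequality `p a b^(p-1) ≤ a^p + (p-1) b^p`, for
`(a, b) = (s, t r)` and `(a, b) = (r, s / t)`, and the square `(1 + t⁻²)(t r - s)²`. All three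
terms are nonnegative and vanish when `s = t r`, and the square vanishes only there.
-/

/-- The scalar function `G(t,s,r)` underlying the Picone-type identity for `-Δ_p - Δ`. -/
noncomputable def Gfun (p t s r : ℝ) : ℝ :=
  (1 + (p - 1) * t ^ p) * r ^ p + (1 + (p - 1) * t ^ (-p)) * s ^ p
    + (1 + t ^ (2 : ℕ)) * r ^ (2 : ℕ) + (1 + t⁻¹ ^ (2 : ℕ)) * s ^ (2 : ℕ)
    - p * t ^ (p - 1) * r ^ (p - 1) * s - p * t ^ (1 - p) * s ^ (p - 1) * r
    - 2 * t * r * s - 2 * t⁻¹ * r * s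

noncomputable def youngGap (p a b : ℝ) : ℝ :=
  a ^ p + (p - 1) * b ^ p - p * a * b ^ (p - 1)

lemma youngGap_nonneg {p a b : ℝ} (hp : 1 < p) (ha : 0 ≤ a) (hb : 0 ≤ b) :
    0 ≤ youngGap p a b := by
  have hp₀ : 0 < p := zero_lt_one.trans hp
  have hpq : p.HolderConjugate (p / (p - 1)) := .conjExponent hp
  have young := Real.young_inequality_of_nonneg ha (Real.rpow_nonneg hb (p - 1)) hpq
  rw [← Real.rpow_mul hb, show (p - 1) * (p / (p - 1)) = p by field_simp [sub_ne_zero.2 hp.ne']]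
    at young
  have : p * (a * b ^ (p - 1)) ≤ a ^ p + (p - 1) * b ^ p :=
    calc p * (a * b ^ (p - 1)) ≤ p * (a ^ p / p + b ^ p / (p / (p - 1))) := by gcongr
      _ = a ^ p + (p - 1) * b ^ p := by field_simp
  unfold youngGap
  linarith

lemma youngGap_self {p a : ℝ} (hp : p ≠ 0) (ha : 0 ≤ a) : youngGap p a a = 0 := by
  have : a ^ p = a ^ (p - 1) * a := by
    simpa using Real.rpow_add' ha (y := p - 1) (z := 1) (by simpa using hp)
  rw [youngGap, this]
  ring

lemma Gfun_eq_youngGap_add {p t s r : ℝ} (ht : 0 < t) (hs : 0 ≤ s) (hr : 0 ≤ r) :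
    Gfun p t s r = youngGap p s (t * r) + youngGap p r (s / t)
      + (1 + t⁻¹ ^ 2) * (t * r - s) ^ 2 := by
  have hneg : t ^ (-p) = (t ^ p)⁻¹ := Real.rpow_neg ht.le p
  have hneg' : t ^ (1 - p) = (t ^ (p - 1))⁻¹ := by
    rw [← Real.rpow_neg ht.le, neg_sub]
  have htp : t ^ p ≠ 0 := (Real.rpow_pos_of_pos ht p).ne'
  have htp' : t ^ (p - 1) ≠ 0 := (Real.rpow_pos_of_pos ht _).ne'
  rw [Gfun, youngGap, youngGap, hneg, hneg']
  simp only [Real.mul_rpow ht.le hr, Real.div_rpow hs ht.le]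
  field_simp
  ring

/-- For `p > 1`, `t > 0`, `r, s ≥ 0`, one has `G(t,s,r) ≥ 0`, with equality
if and only if `s = t r`. -/
theorem Gfun_nonneg (p t s r : ℝ) (hp : 1 < p) (ht : 0 < t) (hs : 0 ≤ s) (hr : 0 ≤ r) :
    0 ≤ Gfun p t s r ∧ (Gfun p t s r = 0 ↔ s = t * r) := by
  have hY₁ : 0 ≤ youngGap p s (t * r) := youngGap_nonneg hp hs (by positivity)
  have hY₂ : 0 ≤ youngGap p r (s / t) := youngGap_nonneg hp hr (by positivity)
  have hsq : 0 ≤ (1 + t⁻¹ ^ 2) * (t * r - s) ^ 2 := by positivity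
  rw [Gfun_eq_youngGap_add ht hs hr]
  refine ⟨add_nonneg (add_nonneg hY₁ hY₂) hsq, fun hG => ?_, ?_⟩
  · have hsq₀ : (1 + t⁻¹ ^ 2) * (t * r - s) ^ 2 = 0 := by linarith
    have : t * r - s = 0 := by
      simpa using (mul_eq_zero.1 hsq₀).resolve_left (by positivity)
    linarith
  · rintro rfl
    have hp₀ : p ≠ 0 := (zero_lt_one.trans hp).ne'
    rw [mul_div_cancel_left₀ r ht.ne', youngGap_self hp₀ hr, youngGap_self hp₀ (by positivity)]
    ring
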